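/- Lemma: Let P be a rook placement on a rectangular Ferrers board and let X, Y ∈ P form a 12-pattern. If row(Y) < ρ(X), then there exists a pivot-path J with last element Y such that X J₁ is a 21-pattern (J₁ the first element of J). -/
import Mathlib


open scoped Classical

/-- A cell (square) of the grid: `(column, row)`, both `≥ 1` for genuine cells. -/
abbrev Cell : Type := ℕ × ℕ

/-- The rectangle `R(a,b)` consisting of all cells `(i,j)` with `1 ≤ i ≤ a`, `1 ≤ j ≤ b`. -/
def Rect (a b : ℕ) : Finset Cell := Finset.Icc 1 a ×ˢ Finset.Icc 1 b

/-- A Ferrers board (French notation): a down-left closed finite set of cells with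
positive coordinates. -/
def IsFerrers (F : Finset Cell) : Prop :=
  ∀ p ∈ F, 1 ≤ p.1 ∧ 1 ≤ p.2 ∧
    ∀ q : Cell, 1 ≤ q.1 → 1 ≤ q.2 → q.1 ≤ p.1 → q.2 ≤ p.2 → q ∈ F

/-- A rook placement on a board `F`: a subset of `F` with at most one cell in each
column and at most one cell in each row. -/
def IsPlacement (F P : Finset Cell) : Prop :=
  P ⊆ F ∧ (∀ p ∈ P, ∀ q ∈ P, p.1 = q.1 → p = q) ∧
    (∀ p ∈ P, ∀ q ∈ P, p.2 = q.2 → p = q)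

/-- A decreasing sequence in `P`: columns strictly increase, rows strictly decrease. -/
def IsDecSeq (P : Finset Cell) (k : ℕ) (S : Fin k → Cell) : Prop :=
  (∀ i, S i ∈ P) ∧ ∀ i j : Fin k, i < j → (S i).1 < (S j).1 ∧ (S j).2 < (S i).2

/-- An increasing sequence in `P`: columns and rows both strictly increase. -/
def IsIncSeq (P : Finset Cell) (k : ℕ) (S : Fin k → Cell) : Prop :=
  (∀ i, S i ∈ P) ∧ ∀ i j : Fin k, i < j → (S i).1 < (S j).1 ∧ (S i).2 < (S j).2

/-- Lexicographic comparison of two sequences of cells by their rows (values),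
entry by entry from the left. -/
def rowLexLE (k : ℕ) (S T : Fin k → Cell) : Prop :=
  (∀ i, (S i).2 = (T i).2) ∨
    ∃ i : Fin k, (S i).2 < (T i).2 ∧ ∀ j : Fin k, j < i → (S j).2 = (T j).2

/-- The condition for a left pivot in row `r`, column `c`, given the placement `P` and
the set `prev` of pivots already placed (in rows below `r`): the element of `P` in row
`r` has `c` strictly to its left, column `c` contains an element of `P` below row `r`,
and column `c` contains no pivot yet. -/
def pivCondL (P prev : Finset Cell) (r c : ℕ) : Prop :=
  (∃ x ∈ P, x.2 = r ∧ c < x.1) ∧ (∃ y ∈ P, y.1 = c ∧ y.2 < r) ∧ ∀ v ∈ prev, v.1 ≠ c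

/-- The condition for a right pivot in row `r`, column `c`. -/
def pivCondR (P prev : Finset Cell) (r c : ℕ) : Prop :=
  (∃ x ∈ P, x.2 = r ∧ x.1 < c) ∧ (∃ y ∈ P, y.1 = c ∧ y.2 < r) ∧ ∀ v ∈ prev, v.1 ≠ c

/-- The left pivots among rows `1,…,r`, built row by row from the bottom: no pivot in
the bottom row; in row `r ≥ 2`, if an admissible column exists, the pivot goes in the
rightmost one. -/
noncomputable def pivLAux (P : Finset Cell) : ℕ → Finset Cell
  | 0 => ∅
  | r + 1 =>
    let prev := pivLAux P r
    if r = 0 then prev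
    else if ∃ c, pivCondL P prev (r + 1) c then
      insert (sSup {c | pivCondL P prev (r + 1) c}, r + 1) prev
    else prev

/-- The right pivots among rows `1,…,r`: in row `r ≥ 2`, the pivot goes in the leftmost
admissible column. -/
noncomputable def pivRAux (P : Finset Cell) : ℕ → Finset Cell
  | 0 => ∅
  | r + 1 =>
    let prev := pivRAux P r
    if r = 0 then prev
    else if ∃ c, pivCondR P prev (r + 1) c then
      insert (sInf {c | pivCondR P prev (r + 1) c}, r + 1) prev
    else prev

/-- The left pivots `pivL(P)` of a placement `P` on a board with `n` rows. -/
noncomputable def pivL (n : ℕ) (P : Finset Cell) : Finset Cell := pivLAux P n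

/-- The right pivots `pivR(P)` of a placement `P` on a board with `n` rows. -/
noncomputable def pivR (n : ℕ) (P : Finset Cell) : Finset Cell := pivRAux P n

/-- `ρ(X)`: the row of the (left) pivot in the column of `X`, or `∞` if there is none. -/
noncomputable def rho (n : ℕ) (P : Finset Cell) (X : Cell) : ℕ∞ :=
  if ∃ r, (X.1, r) ∈ pivL n P then ((sSup {r | (X.1, r) ∈ pivL n P} : ℕ) : ℕ∞) else ⊤

/-- `κ(X)`: the column of the (left) pivot in the row of `X`, or `0` if there is none. -/
noncomputable def kappa (n : ℕ) (P : Finset Cell) (X : Cell) : ℕ :=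
  sSup {c | (c, X.2) ∈ pivL n P}

/-- A pivot-path: an increasing subsequence `I` of `P` such that each consecutive pair
creates a pivot, i.e. `ρ(I_i) = row(I_{i+1})` for all `i`. -/
def IsPivotPath (n : ℕ) (P : Finset Cell) (m : ℕ) (I : Fin m → Cell) : Prop :=
  IsIncSeq P m I ∧ ∀ (i : Fin m) (h : i.1 + 1 < m),
    rho n P (I i) = ((I ⟨i.1 + 1, h⟩).2 : ℕ∞)

section Aux

lemma pivLAux_succ (P : Finset Cell) (k : ℕ) :
    pivLAux P (k+1) =
      if k = 0 then pivLAux P k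
      else if ∃ c, pivCondL P (pivLAux P k) (k + 1) c then
        insert (sSup {c | pivCondL P (pivLAux P k) (k + 1) c}, k + 1) (pivLAux P k)
      else pivLAux P k := rfl

lemma pivLAux_mono (P : Finset Cell) {r s : ℕ} (h : r ≤ s) :
    pivLAux P r ⊆ pivLAux P s := by
  induction s with
  | zero => simpa [Nat.le_zero.mp h] using Finset.Subset.refl _
  | succ k ih =>
    rcases Nat.lt_or_ge r (k+1) with h' | h'
    · refine (ih (by omega)).trans ?_
      rw [pivLAux_succ]
      split
      · exact Finset.Subset.refl _
      · split
        · exact Finset.subset_insert _ _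
        · exact Finset.Subset.refl _
    · have : r = k + 1 := by omega
      subst this; exact Finset.Subset.refl _

lemma pivLAux_row_le (P : Finset Cell) : ∀ r, ∀ v ∈ pivLAux P r, v.2 ≤ r := by
  intro r
  induction r with
  | zero => intro v hv; simp [pivLAux] at hv
  | succ k ih =>
    intro v hv
    rw [pivLAux_succ] at hv
    split at hv
    · exact (ih v hv).trans (by omega)
    · split at hv
      · rcases Finset.mem_insert.mp hv with h | h
        · subst h; simp
        · exact (ih v h).trans (by omega)
      · exact (ih v hv).trans (by omega)

lemma pivLAux_mem_self (P : Finset Cell) : ∀ r, ∀ v ∈ pivLAux P r, v ∈ pivLAux P v.2 := by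
  intro r
  induction r with
  | zero => intro v hv; simp [pivLAux] at hv
  | succ k ih =>
    intro v hv
    rw [pivLAux_succ] at hv
    split at hv
    · exact ih v hv
    · split at hv
      · rcases Finset.mem_insert.mp hv with h | h
        · subst h; rw [pivLAux_succ]; simp_all
        · exact ih v h
      · exact ih v hv

lemma pivCondL_bddAbove (P prev : Finset Cell) (r : ℕ) :
    BddAbove {c | pivCondL P prev r c} := by
  refine ⟨P.sup Prod.fst, fun c hc => ?_⟩
  obtain ⟨x, hx, _, hcx⟩ := hc.1
  exact le_of_lt (lt_of_lt_of_le hcx (Finset.le_sup hx))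

/-- A pivot with row `k+1` (where `k ≠ 0`) is exactly the newly inserted element. -/
lemma pivLAux_new (P : Finset Cell) (k : ℕ) {v : Cell}
    (hv : v ∈ pivLAux P (k+1)) (hrow : v.2 = k + 1) :
    k ≠ 0 ∧ pivCondL P (pivLAux P k) (k+1) v.1 ∧
      v = (sSup {c | pivCondL P (pivLAux P k) (k + 1) c}, k + 1) := by
  have hnot : v ∉ pivLAux P k := fun h => by
    have := pivLAux_row_le P k v h; omega
  rw [pivLAux_succ] at hv
  split at hv
  · exact absurd hv hnot
  · split at hv
    · rcases Finset.mem_insert.mp hv with h | h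
      · subst h
        rename_i hk hex
        refine ⟨hk, ?_, rfl⟩
        have := Nat.sSup_mem (s := {c | pivCondL P (pivLAux P k) (k + 1) c}) hex
          (pivCondL_bddAbove _ _ _)
        exact this
      · exact absurd h hnot
    · exact absurd hv hnot

lemma pivLAux_col_unique (P : Finset Cell) (t : ℕ) {v w : Cell}
    (hv : v ∈ pivLAux P t) (hw : w ∈ pivLAux P t) (hcol : v.1 = w.1) : v = w := by
  -- WLOG v.2 ≤ w.2
  wlog hle : v.2 ≤ w.2 generalizing v w
  · exact (this hw hv hcol.symm (by omega)).symm
  have hw' := pivLAux_mem_self P t w hw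
  have hv' := pivLAux_mem_self P t v hv
  rcases Nat.eq_zero_or_pos w.2 with h0 | hpos
  · rw [h0] at hw'; simp [pivLAux] at hw'
  obtain ⟨k, hk⟩ : ∃ k, w.2 = k + 1 := ⟨w.2 - 1, by omega⟩
  rw [hk] at hw'
  obtain ⟨hk0, hcond, hweq⟩ := pivLAux_new P k hw' hk
  by_cases hvw : v.2 = w.2
  · -- both are the new element
    rw [hvw, hk] at hv'
    obtain ⟨_, _, hveq⟩ := pivLAux_new P k hv' (by omega)
    rw [hveq, hweq]
  · have hlt : v.2 < w.2 := lt_of_le_of_ne hle hvw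
    have hvk : v ∈ pivLAux P k := pivLAux_mono P (by omega) hv'
    exact absurd hcol (hcond.2.2 v hvk)

lemma rho_eq_of_mem (n : ℕ) (P : Finset Cell) (X : Cell) (s : ℕ)
    (hs : (X.1, s) ∈ pivL n P) : rho n P X = (s : ℕ∞) := by
  have hset : {r | (X.1, r) ∈ pivL n P} = {s} := by
    ext r
    simp only [Set.mem_setOf_eq, Set.mem_singleton_iff]
    constructor
    · intro hr
      have := pivLAux_col_unique P n hr hs rfl
      exact (Prod.mk.injEq _ _ _ _).mp this |>.2
    · rintro rfl; exact hs
  rw [rho, if_pos ⟨s, hs⟩, hset, csSup_singleton]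

/-- The key step: a pivot appears in `Y`'s row, giving `Z` with `ρ(Z) = row Y`. -/
lemma step_lemma (m n : ℕ) (P : Finset Cell) (hP : IsPlacement (Rect m n) P)
    (X Y : Cell) (hX : X ∈ P) (hY : Y ∈ P)
    (h1 : X.1 < Y.1) (h2 : X.2 < Y.2)
    (hrho : (Y.2 : ℕ∞) < rho n P X) :
    ∃ Z ∈ P, X.1 < Z.1 ∧ Z.1 < Y.1 ∧ Z.2 < Y.2 ∧ rho n P Z = (Y.2 : ℕ∞) := by
  have hYn : Y.2 ≤ n := by
    have := hP.1 hY
    simp only [Rect, Finset.mem_product, Finset.mem_Icc] at this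
    exact this.2.2
  have hX1 : 1 ≤ X.2 := by
    have := hP.1 hX
    simp only [Rect, Finset.mem_product, Finset.mem_Icc] at this
    exact this.2.1
  obtain ⟨k, hk⟩ : ∃ k, Y.2 = k + 1 := ⟨Y.2 - 1, by omega⟩
  have hk0 : k ≠ 0 := by omega
  set prev := pivLAux P k with hprev
  set S := {c | pivCondL P prev (k+1) c} with hS
  -- no pivot in column X.1 at any row ≤ n except above Y.2
  have hnocol : ∀ v ∈ pivL n P, v.1 ≠ X.1 ∨ ¬ v.2 ≤ Y.2 := by
    intro v hv
    by_contra hcon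
    push_neg at hcon
    obtain ⟨hc1, hc2⟩ := hcon
    have : (X.1, v.2) ∈ pivL n P := by
      have : (X.1, v.2) = v := Prod.ext hc1.symm rfl
      rw [this]; exact hv
    have := rho_eq_of_mem n P X v.2 this
    rw [this] at hrho
    exact absurd (Nat.cast_le.mpr hc2) (not_le.mpr hrho)
  have hXS : X.1 ∈ S := by
    refine ⟨⟨Y, hY, by omega, by omega⟩, ⟨X, hX, rfl, by omega⟩, ?_⟩
    intro v hv
    have hvn : v ∈ pivL n P := pivLAux_mono P (by omega) hv
    have hvk : v.2 ≤ k := pivLAux_row_le P k v hv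
    rcases hnocol v hvn with h | h
    · exact h
    · omega
  have hne : S.Nonempty := ⟨X.1, hXS⟩
  have hbdd : BddAbove S := pivCondL_bddAbove P prev (k+1)
  have hcS : sSup S ∈ S := Nat.sSup_mem hne hbdd
  have hXle : X.1 ≤ sSup S := le_csSup hbdd hXS
  -- the pivot (sSup S, k+1) is placed
  have hpiv : (sSup S, k + 1) ∈ pivLAux P (k+1) := by
    rw [pivLAux_succ, if_neg hk0, if_pos ⟨X.1, hXS⟩]
    exact Finset.mem_insert_self _ _
  have hpivn : (sSup S, k + 1) ∈ pivL n P := pivLAux_mono P (by omega) hpiv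
  -- X.1 < sSup S
  have hXlt : X.1 < sSup S := by
    rcases lt_or_eq_of_le hXle with h | h
    · exact h
    · exfalso
      rcases hnocol _ hpivn with h' | h'
      · exact h' (by simpa using h.symm)
      · exact h' (by simp; omega)
  obtain ⟨hx, ⟨Z, hZ, hZ1, hZ2⟩, _⟩ := hcS
  -- sSup S < Y.1 using the row witness, which must be Y
  obtain ⟨x, hxP, hx2, hxlt⟩ := hx
  have hxY : x = Y := hP.2.2 x hxP Y hY (by omega)
  have hxY1 : x.1 = Y.1 := by rw [hxY]
  refine ⟨Z, hZ, by omega, by rw [hZ1]; omega, by omega, ?_⟩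
  have : (Z.1, Y.2) ∈ pivL n P := by rw [hZ1, hk]; exact hpivn
  exact rho_eq_of_mem n P Z Y.2 this

end Aux

lemma main_rec (m n : ℕ) (P : Finset Cell) (hP : IsPlacement (Rect m n) P)
    (X : Cell) (hX : X ∈ P) :
    ∀ r : ℕ, ∀ Y : Cell, Y.2 ≤ r → Y ∈ P → X.1 < Y.1 → X.2 < Y.2 →
      (Y.2 : ℕ∞) < rho n P X →
    ∃ (l : ℕ) (hl : 0 < l) (J : Fin l → Cell), IsPivotPath n P l J ∧
      J ⟨l - 1, by omega⟩ = Y ∧ X.1 < (J ⟨0, hl⟩).1 ∧ (J ⟨0, hl⟩).2 < X.2 := by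
  intro r
  induction r with
  | zero => intro Y hYr _ _ h2 _; omega
  | succ k ih =>
    intro Y hYr hY h1 h2 hrho
    obtain ⟨Z, hZ, hXZ1, hZY1, hZY2, hrhoZ⟩ := step_lemma m n P hP X Y hX hY h1 h2 hrho
    rcases lt_trichotomy Z.2 X.2 with hlt | heq | hgt
    · -- the two-element path [Z, Y]
      refine ⟨2, by omega, fun i => if (i : ℕ) = 0 then Z else Y, ⟨⟨?_, ?_⟩, ?_⟩, ?_, ?_, ?_⟩
      · intro i
        dsimp only
        split
        · exact hZ
        · exact hY
      · intro i j hij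
        have hi : (i : ℕ) = 0 := by omega
        have hj : (j : ℕ) = 1 := by omega
        simp only [hi, hj]
        simp only [if_pos rfl, if_neg (by omega : (1:ℕ) ≠ 0)]
        exact ⟨hZY1, hZY2⟩
      · intro i h
        have hi : (i : ℕ) = 0 := by omega
        simp only [hi]
        simp only [if_pos rfl, if_neg (by omega : (0:ℕ) + 1 ≠ 0)]
        exact hrhoZ
      · simp
      · simp; exact hXZ1
      · simp; exact hlt
    · exfalso
      have : Z = X := hP.2.2 Z hZ X hX heq
      rw [this] at hXZ1; omega
    · -- recurse on Z, then append Y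
      have hZk : Z.2 ≤ k := by omega
      have hrhoZ' : (Z.2 : ℕ∞) < rho n P X :=
        lt_trans (by exact_mod_cast hZY2) hrho
      obtain ⟨l, hl, J', hpath, hlast, hf1, hf2⟩ := ih Z hZk hZ (by omega) hgt hrhoZ'
      refine ⟨l + 1, by omega, fun i => if h : (i : ℕ) < l then J' ⟨i, h⟩ else Y,
        ⟨⟨?_, ?_⟩, ?_⟩, ?_, ?_, ?_⟩
      · intro i
        dsimp only
        split
        · exact hpath.1.1 _
        · exact hY
      · intro i j hij
        dsimp only
        by_cases hjl : (j : ℕ) < l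
        · have hil : (i : ℕ) < l := by omega
          rw [dif_pos hil, dif_pos hjl]
          exact hpath.1.2 _ _ (by exact_mod_cast hij)
        · have hil : (i : ℕ) < l := by omega
          rw [dif_pos hil, dif_neg hjl]
          rcases Nat.lt_or_ge (i : ℕ) (l - 1) with hi | hi
          · have := hpath.1.2 ⟨i, hil⟩ ⟨l - 1, by omega⟩ (by simpa using hi)
            rw [hlast] at this
            exact ⟨lt_trans this.1 hZY1, lt_trans this.2 hZY2⟩
          · have hieq : (⟨(i : ℕ), hil⟩ : Fin l) = ⟨l - 1, by omega⟩ := by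
              apply Fin.ext; simp; omega
            rw [hieq, hlast]
            exact ⟨hZY1, hZY2⟩
      · intro i h
        dsimp only
        by_cases hi : (i : ℕ) + 1 < l
        · have hil : (i : ℕ) < l := by omega
          rw [dif_pos hil, dif_pos hi]
          exact hpath.2 ⟨i, hil⟩ hi
        · have hieq : (i : ℕ) + 1 = l := by omega
          have hil : (i : ℕ) < l := by omega
          rw [dif_pos hil, dif_neg (by omega : ¬ ((i:ℕ) + 1 < l))]
          have : (⟨(i : ℕ), hil⟩ : Fin l) = ⟨l - 1, by omega⟩ := by
            apply Fin.ext; simp; omega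
          rw [this, hlast, hrhoZ]
      · simp
      · dsimp only; rw [dif_pos hl]; exact hf1
      · dsimp only; rw [dif_pos hl]; exact hf2

/-- **Lemma.** If `X, Y ∈ P` form a 12-pattern and `row(Y) < ρ(X)`, then there exists a
pivot-path `J` with last element `Y` such that `X J₁` is a 21-pattern. -/
theorem lemma_pivot3 (m n : ℕ) (P : Finset Cell) (hP : IsPlacement (Rect m n) P)
    (X Y : Cell) (hX : X ∈ P) (hY : Y ∈ P)
    (h12 : X.1 < Y.1 ∧ X.2 < Y.2)
    (hrho : (Y.2 : ℕ∞) < rho n P X) :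
    ∃ (l : ℕ) (hl : 0 < l) (J : Fin l → Cell), IsPivotPath n P l J ∧
      J ⟨l - 1, by omega⟩ = Y ∧ X.1 < (J ⟨0, hl⟩).1 ∧ (J ⟨0, hl⟩).2 < X.2 := by
  exact main_rec m n P hP X hX Y.2 Y le_rfl hY h12.1 h12.2 hrho
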